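/- (Vanishing at infinity.) Let N ≥ 1, let J ∈ L¹(ℝ^N) be nonnegative with unit mass, let ε > 0, c ≥ 0 and R > 0. Let u ∈ C(ℝ^N) ∩ L^∞(ℝ^N) be nonnegative and satisfy (J_ε ∗ u)(x) ≥ c·u(x)² + u(x) for all x ∈ ℝ^N with |x| ≥ R, where c > 0. Then limsup_{|x|→∞} u(x) = 0, i.e. u(x) → 0 as |x| → ∞. -/

import Mathlib

open MeasureTheory Filter Metric Set

noncomputable section

abbrev Sp (N : ℕ) := EuclideanSpace ℝ (Fin N)

/-- The rescaled kernel `J_ε(z) = ε^{-N} J(z/ε)`. -/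
def Jresc (N : ℕ) (J : Sp N → ℝ) (ε : ℝ) (z : Sp N) : ℝ := (1 / ε ^ N) * J (ε⁻¹ • z)

/-- The convolution `(J_ε ∗ u)(x)`. -/
def convJ (N : ℕ) (J : Sp N → ℝ) (ε : ℝ) (u : Sp N → ℝ) (x : Sp N) : ℝ :=
  ∫ y, Jresc N J ε (x - y) * u y

/-- `u` satisfies the nonlocal KPP equation at the point `x`:
`ε^{-m} (J_ε ∗ u - u)(x) + u(x)(a(x) - u(x)) = 0`. -/
def kppEq (N : ℕ) (J a : Sp N → ℝ) (m ε : ℝ) (u : Sp N → ℝ) (x : Sp N) : Prop :=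
  (1 / ε ^ m) * (convJ N J ε u x - u x) + u x * (a x - u x) = 0

/-- Assumption (1.1): `a` continuous, bounded, `a⁺ ≢ 0`, `limsup_{|x|→∞} a(x) < 0`. -/
def assumpA (N : ℕ) (a : Sp N → ℝ) : Prop :=
  Continuous a ∧ (∃ C, ∀ x, |a x| ≤ C) ∧ (∃ x, 0 < a x) ∧
    (∃ R δ : ℝ, 0 < δ ∧ ∀ x : Sp N, R ≤ ‖x‖ → a x ≤ -δ)

/-- Assumption (1.4): `J ∈ L¹` nonnegative, radially symmetric, with unit mass and
finite `m`-th order moment. -/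
def assumpJ (N : ℕ) (J : Sp N → ℝ) (m : ℝ) : Prop :=
  Integrable J ∧ (∀ x, 0 ≤ J x) ∧ (∀ x y : Sp N, ‖x‖ = ‖y‖ → J x = J y) ∧
    (∫ x, J x) = 1 ∧ Integrable (fun x => J x * ‖x‖ ^ m)

/-!
Let `L` be the limsup of `u` at infinity. Far out, `J_ε ∗ u (x)` is an average of `u` whose
weight sits, up to a tail of mass `O(δ)`, where `u ≤ L + δ`; hence eventually
`c u² + u ≤ L + 2δ`. Since `t ↦ c t₊² + t` is monotone and continuous, passing to the limsup
gives `c L₊² + L ≤ L`, so `L ≤ 0`.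
-/

open Bornology Topology

theorem map_limsup_le_of_eventually_le {α : Type*} {l : Filter α} [l.NeBot] {u : α → ℝ}
    {g : ℝ → ℝ} (hg : Monotone g) (hgc : Continuous g) (hu : IsBoundedUnder (· ≤ ·) l u)
    (hu' : IsBoundedUnder (· ≥ ·) l u)
    (h : ∀ M, (∀ᶠ x in l, u x ≤ M) → ∀ δ > 0, ∀ᶠ x in l, g (u x) ≤ M + δ) :
    g (limsup u l) ≤ limsup u l := by
  rw [hg.map_limsup_of_continuousAt u hgc.continuousAt hu hu'.isCoboundedUnder_le]
  refine le_of_forall_pos_le_add fun δ hδ => limsup_le_of_le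
    (hg.isBoundedUnder_ge_comp hu').isCoboundedUnder_le ?_
  have hlt : ∀ᶠ x in l, u x ≤ limsup u l + δ / 2 :=
    (eventually_lt_of_limsup_lt (by linarith) hu).mono fun _ => le_of_lt
  filter_upwards [h _ hlt (δ / 2) (half_pos hδ)] with x hx
  exact hx.trans_eq (by ring)

section KernelAverage

variable {E : Type*} [NormedAddCommGroup E] [MeasurableSpace E] [BorelSpace E] {μ : Measure E}

theorem tendsto_setIntegral_norm_ge_atTop {f : E → ℝ} (hf : Integrable f μ) :
    Tendsto (fun ρ : ℝ => ∫ z in {z | ρ ≤ ‖z‖}, f z ∂μ) atTop (𝓝 0) := by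
  have hempty : ⋂ ρ : ℝ, {z : E | ρ ≤ ‖z‖} = ∅ :=
    eq_empty_of_forall_notMem fun z hz => (lt_add_one ‖z‖).not_ge (mem_iInter.mp hz _)
  simpa [hempty] using
    tendsto_setIntegral_of_antitone (s := fun ρ : ℝ => {z : E | ρ ≤ ‖z‖})
    (fun ρ => measurableSet_le measurable_const measurable_norm)
    (fun _ _ h _ hz => h.trans hz) ⟨0, hf.integrableOn⟩

variable [μ.IsAddLeftInvariant] [μ.IsNegInvariant]

theorem eventually_integral_mul_le_add {K u : E → ℝ}
    (hK : Integrable K μ) (hK0 : ∀ z, 0 ≤ K z) (hK1 : ∫ z, K z ∂μ = 1)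
    (hu : AEStronglyMeasurable u μ) {C : ℝ} (hC : ∀ y, |u y| ≤ C)
    {M : ℝ} (hM : ∀ᶠ y in cobounded E, u y ≤ M) {δ : ℝ} (hδ : 0 < δ) :
    ∀ᶠ x in cobounded E, ∫ y, K (x - y) * u y ∂μ ≤ M + δ := by
  obtain ⟨r, -, hr⟩ := hasBasis_cobounded_norm.eventually_iff.mp hM
  set T : ℝ → Set E := fun ρ => {z | ρ ≤ ‖z‖}
  obtain ⟨ρ, hρ⟩ : ∃ ρ, (C + |M|) * ∫ z in T ρ, K z ∂μ ≤ δ := by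
    have := (tendsto_setIntegral_norm_ge_atTop hK).const_mul (C + |M|)
    rw [mul_zero] at this
    exact (this.eventually (ge_mem_nhds hδ)).exists
  have hT : MeasurableSet (T ρ) := measurableSet_le measurable_const measurable_norm
  filter_upwards [eventually_cobounded_le_norm (r + ρ)] with x hx
  have hux : AEStronglyMeasurable (fun z => u (x - z)) μ :=
    hu.comp_measurePreserving (Measure.measurePreserving_sub_left μ x)
  have hint : Integrable (fun z => K z * u (x - z)) μ :=
    hK.mul_bdd hux (.of_forall fun z => (Real.norm_eq_abs _).trans_le (hC _))
  have hint' : Integrable (fun z => K z * (u (x - z) - M)) μ :=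
    (hint.sub (hK.mul_const M)).congr (.of_forall fun z => (mul_sub _ _ _).symm)
  -- inside `T ρ` the excess `u - M` is at most `C + |M|`; outside, `x - z` lies where `u ≤ M`
  have hbound : ∀ z, K z * (u (x - z) - M) ≤ (C + |M|) * (T ρ).indicator K z := by
    intro z
    by_cases hz : z ∈ T ρ
    · rw [indicator_of_mem hz, mul_comm]
      gcongr
      · exact hK0 z
      · linarith [le_abs_self (u (x - z)), neg_abs_le M, hC (x - z)]
    · rw [indicator_of_notMem hz, mul_zero]
      refine mul_nonpos_of_nonneg_of_nonpos (hK0 z) (sub_nonpos.mpr (hr ?_))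
      have := norm_sub_norm_le x z
      simp only [T, mem_ofPred_eq, not_le] at hz ⊢
      linarith
  calc ∫ y, K (x - y) * u y ∂μ = M + ∫ z, K z * (u (x - z) - M) ∂μ := by
        simp_rw [mul_sub]
        rw [integral_sub hint (hK.mul_const M), integral_mul_const, hK1,
          ← integral_sub_left_eq_self _ μ x]
        simp
    _ ≤ M + (C + |M|) * ∫ z in T ρ, K z ∂μ := by
        rw [← integral_indicator hT, ← integral_const_mul]
        exact add_le_add_right (integral_mono hint' ((hK.indicator hT).const_mul _) hbound) M
    _ ≤ M + δ := by linarith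

end KernelAverage

section Jresc

variable {N : ℕ} {J : Sp N → ℝ} {ε : ℝ}

theorem Jresc_nonneg (hJ : ∀ z, 0 ≤ J z) (hε : 0 ≤ ε) (z : Sp N) : 0 ≤ Jresc N J ε z :=
  mul_nonneg (one_div_nonneg.mpr (pow_nonneg hε N)) (hJ _)

theorem integrable_Jresc (hJ : Integrable J) (hε : ε ≠ 0) :
    Integrable (Jresc N J ε) :=
  ((integrable_comp_smul_iff volume J (inv_ne_zero hε)).mpr hJ).const_mul _

theorem integral_Jresc (hε : 0 < ε) :
    ∫ z, Jresc N J ε z = ∫ z, J z := by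
  simp only [Jresc, integral_const_mul, Measure.integral_comp_inv_smul_of_nonneg volume J hε.le,
    finrank_euclideanSpace_fin, smul_eq_mul]
  field_simp

end Jresc

theorem statement11_general (N : ℕ) (J : Sp N → ℝ)
    (hJint : Integrable J) (hJpos : ∀ x, 0 ≤ J x) (hJmass : (∫ x, J x) = 1)
    (ε : ℝ) (hε : 0 < ε) (c : ℝ) (hc : 0 < c) (R : ℝ)
    (u : Sp N → ℝ) (hucont : Continuous u) (hubdd : ∃ C, ∀ x, |u x| ≤ C)
    (hupos : ∀ x, 0 ≤ u x)
    (hineq : ∀ x : Sp N, R ≤ ‖x‖ → c * u x ^ 2 + u x ≤ convJ N J ε u x) :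
    Tendsto u (cocompact (Sp N)) (nhds 0) := by
  rw [← cobounded_eq_cocompact]
  rcases (cobounded (Sp N)).eq_or_neBot with hbot | _
  · exact hbot ▸ tendsto_bot
  obtain ⟨C, hC⟩ := hubdd
  have hbdd : IsBoundedUnder (· ≤ ·) (cobounded (Sp N)) u :=
    isBoundedUnder_of ⟨C, fun x => (abs_le.mp (hC x)).2⟩
  have hbdd' : IsBoundedUnder (· ≥ ·) (cobounded (Sp N)) u := isBoundedUnder_of ⟨0, hupos⟩
  set g : ℝ → ℝ := fun t => c * max t 0 ^ 2 + t
  have hg : Monotone g := fun s t hst => by dsimp only [g]; gcongr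
  have hgL := map_limsup_le_of_eventually_le hg (by fun_prop) hbdd hbdd' fun M hM δ hδ => by
    filter_upwards [eventually_integral_mul_le_add (integrable_Jresc hJint hε.ne')
      (Jresc_nonneg hJpos hε.le) ((integral_Jresc hε).trans hJmass)
      hucont.aestronglyMeasurable hC hM hδ, eventually_cobounded_le_norm R] with x hconv hxR
    simpa [g, max_eq_left (hupos x)] using (hineq x hxR).trans hconv
  have hL : limsup u (cobounded (Sp N)) ≤ 0 := by
    by_contra! hL
    simp only [g, max_eq_left hL.le] at hgL
    nlinarith [mul_pos hc (mul_pos hL hL)]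
  exact tendsto_of_le_liminf_of_limsup_le
    (le_liminf_of_le hbdd.isCoboundedUnder_ge (.of_forall hupos)) hL hbdd hbdd'

/-- **Vanishing at infinity.** If a bounded continuous nonnegative `u` satisfies
`(J_ε ∗ u)(x) ≥ c u(x)² + u(x)` for all `|x| ≥ R` with `c > 0`, then `u(x) → 0` as
`|x| → ∞`. -/
theorem statement11 (N : ℕ) (hN : 1 ≤ N) (J : Sp N → ℝ)
    (hJint : Integrable J) (hJpos : ∀ x, 0 ≤ J x) (hJmass : (∫ x, J x) = 1)
    (ε : ℝ) (hε : 0 < ε) (c : ℝ) (hc0 : 0 ≤ c) (hc : 0 < c) (R : ℝ) (hR : 0 < R)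
    (u : Sp N → ℝ) (hucont : Continuous u) (hubdd : ∃ C, ∀ x, |u x| ≤ C)
    (hupos : ∀ x, 0 ≤ u x)
    (hineq : ∀ x : Sp N, R ≤ ‖x‖ → c * u x ^ 2 + u x ≤ convJ N J ε u x) :
    Tendsto u (cocompact (Sp N)) (nhds 0) :=
  statement11_general N J hJint hJpos hJmass ε hε c hc R u hucont hubdd hupos hineq
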